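/- (Theorem 2.) Under the MIS/RMIS tableau setup, assume: (i) the inner table is third order, row-sum consistent, and has an explicit first stage, i.e. (b^I)^⊺𝟙 = 1, (b^I)^⊺c^I = 1/2, (b^I)^⊺(c^I × c^I) = 1/3, (b^I)^⊺A^I c^I = 1/6, A^I 𝟙 = c^I, c^I_1 = 0, and the first row of A^I is zero; (ii) the outer table is explicit (A^O strictly lower triangular), row-sum consistent (A^O 𝟙_{s^O} = c^O), and fourth order, i.e. (b^O)^⊺𝟙 = 1, (b^O)^⊺c^O = 1/2, (b^O)^⊺((c^O)^2) = 1/3, (b^O)^⊺A^O c^O = 1/6, (b^O)^⊺((c^O)^3) = 1/4, (b^O × c^O)^⊺ A^O c^O = 1/8, (b^O)^⊺A^O((c^O)^2) = 1/12, and (b^O)^⊺A^O A^O c^O = 1/24; (iii) (v^O)^⊺ A^O c^O = 1/12, where v^O ∈ ℝ^{s^O} has v^O_1 = 0, v^O_i = b^O_i (c^O_i − c^O_{i−1}) + (c^O_{i+1} − c^O_{i−1}) Σ_{j=i+1}^{s^O} b^O_j for 1 < i < s^O, and v^O_{s^O} = b^O_{s^O}(c^O_{s^O} − c^O_{s^O−1}).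 Then, writing b^{{f}} := b^f, b^{{s}} := b^s, c^{{f}} := c^f, c^{{s}} := c^s, A^{{f,f}} := A^{f,f}, etc., all 28 GARK order conditions through order four hold: for every σ, ν, μ ∈ {f, s}: (b^{{σ}})^⊺𝟙 = 1, (b^{{σ}})^⊺c^{{σ}} = 1/2, (b^{{σ}})^⊺((c^{{σ}})^2) = 1/3, (b^{{σ}})^⊺A^{{σ,ν}}c^{{ν}} = 1/6, (b^{{σ}})^⊺((c^{{σ}})^3) = 1/4, (b^{{σ}} × c^{{σ}})^⊺A^{{σ,ν}}c^{{ν}} = 1/8, (b^{{σ}})^⊺A^{{σ,ν}}((c^{{ν}})^2) = 1/12, and (b^{{σ}})^⊺A^{{σ,μ}}A^{{μ,ν}}c^{{ν}} = 1/24. -/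

import Mathlib

open Matrix BigOperators Finset

/-- The increments `d_j = c^O_{j+1} - c^O_j` (with `d_{s^O} = 1 - c^O_{s^O}`). -/
noncomputable def misD (sO : ℕ) (cO : Fin sO → ℝ) (j : Fin sO) : ℝ :=
  if h : j.val + 1 < sO then cO ⟨j.val + 1, h⟩ - cO j else 1 - cO j

/-- The fast-fast GARK coefficient matrix `A^{f,f}` of the MIS/RMIS tableau. -/
noncomputable def misAff (sI sO : ℕ) (AI : Matrix (Fin sI) (Fin sI) ℝ)
    (bI : Fin sI → ℝ) (cO : Fin sO → ℝ) :
    Matrix (Fin sO × Fin sI) (Fin sO × Fin sI) ℝ :=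
  fun ip jq =>
    if jq.1 < ip.1 then misD sO cO jq.1 * bI jq.2
    else if jq.1 = ip.1 then misD sO cO ip.1 * AI ip.2 jq.2
    else 0

/-- The slow-fast GARK coefficient matrix `A^{s,f}` of the MIS/RMIS tableau. -/
noncomputable def misAsf (sI sO : ℕ) (bI : Fin sI → ℝ) (cO : Fin sO → ℝ) :
    Matrix (Fin sO) (Fin sO × Fin sI) ℝ :=
  fun i jq => if jq.1 < i then misD sO cO jq.1 * bI jq.2 else 0

/-- The fast-slow GARK coefficient matrix `A^{f,s}` of the MIS/RMIS tableau. -/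
noncomputable def misAfs (sI sO : ℕ) (cI : Fin sI → ℝ)
    (AO : Matrix (Fin sO) (Fin sO) ℝ) (bO : Fin sO → ℝ) :
    Matrix (Fin sO × Fin sI) (Fin sO) ℝ :=
  fun ip j =>
    if ip.1.val = 0 then
      (if h : 1 < sO then cI ip.2 * AO ⟨1, h⟩ j else 0)
    else if h : ip.1.val + 1 < sO then
      AO ip.1 j + cI ip.2 * (AO ⟨ip.1.val + 1, h⟩ j - AO ip.1 j)
    else
      AO ip.1 j + cI ip.2 * (bO j - AO ip.1 j)

/-- The fast abscissae `c^f` of the MIS/RMIS tableau. -/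
noncomputable def misCf (sI sO : ℕ) (cI : Fin sI → ℝ) (cO : Fin sO → ℝ) :
    Fin sO × Fin sI → ℝ :=
  fun ip => cO ip.1 + misD sO cO ip.1 * cI ip.2

/-- The RMIS fast weights `b^f` (i-th block is `b^O_i e_1`). -/
noncomputable def misBf (sI sO : ℕ) (bO : Fin sO → ℝ) : Fin sO × Fin sI → ℝ :=
  fun ip => if ip.2.val = 0 then bO ip.1 else 0

/-- The vector `v^O` appearing in the fourth-order RMIS condition. -/
noncomputable def misV (sO : ℕ) (bO cO : Fin sO → ℝ) (i : Fin sO) : ℝ :=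
  if i.val = 0 then 0
  else if h : i.val + 1 < sO then
    bO i * (cO i - cO ⟨i.val - 1, by have := i.isLt; omega⟩) +
      (cO ⟨i.val + 1, h⟩ - cO ⟨i.val - 1, by have := i.isLt; omega⟩) *
        ∑ j ∈ Finset.univ.filter (fun j => i < j), bO j
  else bO i * (cO i - cO ⟨i.val - 1, by have := i.isLt; omega⟩)


section Helpers

/-- `cO` extended to `ℕ`, with value `1` past the end. -/
noncomputable def phiN (sO : ℕ) (cO : Fin sO → ℝ) (k : ℕ) : ℝ :=
  if h : k < sO then cO ⟨k, h⟩ else 1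

/-- The increments as a function on `ℕ`. -/
noncomputable def dN (sO : ℕ) (cO : Fin sO → ℝ) (k : ℕ) : ℝ :=
  phiN sO cO (k + 1) - phiN sO cO k

/-- `AO *ᵥ cO` extended to `ℕ`, with value `1/2` past the end. -/
noncomputable def wN (sO : ℕ) (AO : Matrix (Fin sO) (Fin sO) ℝ) (cO : Fin sO → ℝ) (k : ℕ) : ℝ :=
  if h : k < sO then (AO *ᵥ cO) ⟨k, h⟩ else 1 / 2

/-- Tail sums of `bO`. -/
noncomputable def bTail (sO : ℕ) (bO : Fin sO → ℝ) (k : ℕ) : ℝ :=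
  ∑ i : Fin sO, if k ≤ (i : ℕ) then bO i else 0

lemma misD_eq_dN (sO : ℕ) (cO : Fin sO → ℝ) (j : Fin sO) :
    misD sO cO j = dN sO cO j := by
  unfold misD dN phiN
  by_cases h : (j : ℕ) + 1 < sO <;> simp [h, j.isLt]

lemma phiN_val (sO : ℕ) (cO : Fin sO → ℝ) (j : Fin sO) : phiN sO cO j = cO j := by
  simp [phiN, j.isLt]

lemma tele_sum (sO : ℕ) (i : Fin sO) (F : ℕ → ℝ) :
    ∑ j : Fin sO, (if (j : ℕ) < (i : ℕ) then F ((j : ℕ) + 1) - F (j : ℕ) else 0)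
      = F (i : ℕ) - F 0 := by
  rw [Fin.sum_univ_eq_sum_range (fun k => if k < (i : ℕ) then F (k + 1) - F k else 0) sO]
  rw [← Finset.sum_filter]
  have h : (Finset.range sO).filter (fun k => k < (i : ℕ)) = Finset.range (i : ℕ) := by
    ext k
    simp only [Finset.mem_filter, Finset.mem_range]
    have := i.isLt; omega
  rw [h, Finset.sum_range_sub]

lemma sum_bf (sI sO : ℕ) (hsI : 1 ≤ sI) (bO : Fin sO → ℝ) (g : Fin sO × Fin sI → ℝ) :
    ∑ ip : Fin sO × Fin sI, misBf sI sO bO ip * g ip = ∑ i, bO i * g (i, ⟨0, hsI⟩) := by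
  rw [Fintype.sum_prod_type]
  refine Finset.sum_congr rfl fun i _ => ?_
  rw [Finset.sum_eq_single (⟨0, hsI⟩ : Fin sI)]
  · simp [misBf]
  · intro b _ hb
    simp [misBf, show (b : ℕ) ≠ 0 from fun h => hb (Fin.ext h)]
  · simp

lemma inner1 (sI : ℕ) (bI cI : Fin sI → ℝ) (hbI1 : ∑ q, bI q = 1)
    (hbI2 : ∑ q, bI q * cI q = 1 / 2) (a t : ℝ) :
    ∑ q, bI q * (a + t * cI q) = a + t / 2 := by
  have h : ∀ q ∈ Finset.univ, bI q * (a + t * cI q) = a * bI q + t * (bI q * cI q) :=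
    fun q _ => by ring
  rw [Finset.sum_congr rfl h, Finset.sum_add_distrib, ← Finset.mul_sum, ← Finset.mul_sum,
    hbI1, hbI2]
  ring

lemma inner2 (sI : ℕ) (bI cI : Fin sI → ℝ) (hbI1 : ∑ q, bI q = 1)
    (hbI2 : ∑ q, bI q * cI q = 1 / 2) (hbI3 : ∑ q, bI q * (cI q * cI q) = 1 / 3) (a t : ℝ) :
    ∑ q, bI q * (a + t * cI q) ^ 2 = a ^ 2 + a * t + t ^ 2 / 3 := by
  have h : ∀ q ∈ Finset.univ, bI q * (a + t * cI q) ^ 2 =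
      a ^ 2 * bI q + (2 * a * t) * (bI q * cI q) + t ^ 2 * (bI q * (cI q * cI q)) :=
    fun q _ => by ring
  rw [Finset.sum_congr rfl h, Finset.sum_add_distrib, Finset.sum_add_distrib,
    ← Finset.mul_sum, ← Finset.mul_sum, ← Finset.mul_sum, hbI1, hbI2, hbI3]
  ring

lemma inner3 (sI : ℕ) (AI : Matrix (Fin sI) (Fin sI) ℝ) (bI cI : Fin sI → ℝ)
    (hbI1 : ∑ q, bI q = 1) (hbI2 : ∑ q, bI q * cI q = 1 / 2)
    (hbI4 : ∑ q, bI q * (AI *ᵥ cI) q = 1 / 6) (a t1 t2 : ℝ) :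
    ∑ q, bI q * (a + t1 * cI q + t2 * (AI *ᵥ cI) q) = a + t1 / 2 + t2 / 6 := by
  have h : ∀ q ∈ Finset.univ, bI q * (a + t1 * cI q + t2 * (AI *ᵥ cI) q) =
      a * bI q + t1 * (bI q * cI q) + t2 * (bI q * (AI *ᵥ cI) q) :=
    fun q _ => by ring
  rw [Finset.sum_congr rfl h, Finset.sum_add_distrib, Finset.sum_add_distrib,
    ← Finset.mul_sum, ← Finset.mul_sum, ← Finset.mul_sum, hbI1, hbI2, hbI4]
  ring

lemma asf_apply (sI sO : ℕ) (bI : Fin sI → ℝ) (cO : Fin sO → ℝ)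
    (u : Fin sO × Fin sI → ℝ) (i : Fin sO) :
    (misAsf sI sO bI cO *ᵥ u) i
      = ∑ j : Fin sO, (if (j : ℕ) < (i : ℕ) then misD sO cO j * ∑ q, bI q * u (j, q) else 0) := by
  simp only [mulVec, dotProduct, misAsf, Fintype.sum_prod_type]
  refine Finset.sum_congr rfl fun j _ => ?_
  by_cases h : (j : ℕ) < (i : ℕ)
  · simp only [show j < i from h, if_pos h, if_true, Finset.mul_sum]
    exact Finset.sum_congr rfl fun q _ => by ring
  · simp [h, show ¬ j < i from h]

lemma aff_z (sI sO : ℕ) (hsI : 1 ≤ sI) (AI : Matrix (Fin sI) (Fin sI) ℝ)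
    (bI : Fin sI → ℝ) (cO : Fin sO → ℝ) (hAI1 : ∀ q, AI ⟨0, hsI⟩ q = 0)
    (u : Fin sO × Fin sI → ℝ) (i : Fin sO) :
    (misAff sI sO AI bI cO *ᵥ u) (i, ⟨0, hsI⟩) = (misAsf sI sO bI cO *ᵥ u) i := by
  simp only [mulVec, dotProduct, misAff, misAsf]
  refine Finset.sum_congr rfl fun jq _ => ?_
  by_cases h1 : jq.1 < i
  · simp [h1]
  · by_cases h2 : jq.1 = i <;> simp [h1, h2, hAI1]

end Helpers

section Helpers2

lemma afs_z (sI sO : ℕ) (hsI : 1 ≤ sI) (hsO : 2 ≤ sO) (cI : Fin sI → ℝ)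
    (AO : Matrix (Fin sO) (Fin sO) ℝ) (bO : Fin sO → ℝ)
    (hcI1 : cI ⟨0, hsI⟩ = 0)
    (hAO0 : ∀ j, AO ⟨0, Nat.zero_lt_of_lt hsO⟩ j = 0)
    (u : Fin sO → ℝ) (i : Fin sO) :
    (misAfs sI sO cI AO bO *ᵥ u) (i, ⟨0, hsI⟩) = (AO *ᵥ u) i := by
  simp only [mulVec, dotProduct, misAfs]
  refine Finset.sum_congr rfl fun j _ => ?_
  by_cases h : (i : ℕ) = 0
  · have hi : i = ⟨0, by omega⟩ := Fin.ext h
    have hAOi : AO i j = 0 := by rw [hi]; exact hAO0 j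
    simp [h, hcI1, hAOi]
  · by_cases h2 : (i : ℕ) + 1 < sO <;> simp [h, h2, hcI1]

lemma wN_zero (sO : ℕ) (hsO : 2 ≤ sO)
    (AO : Matrix (Fin sO) (Fin sO) ℝ) (cO : Fin sO → ℝ)
    (hAO0 : ∀ j, AO ⟨0, Nat.zero_lt_of_lt hsO⟩ j = 0) : wN sO AO cO 0 = 0 := by
  simp [wN, mulVec, dotProduct, hAO0, show 0 < sO by omega]

lemma bTail_top (sO : ℕ) (bO : Fin sO → ℝ) (k : ℕ) (hk : sO ≤ k) : bTail sO bO k = 0 := by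
  unfold bTail
  refine Finset.sum_eq_zero fun i _ => ?_
  have := i.isLt
  rw [if_neg (by omega)]

lemma bTail_succ (sO : ℕ) (bO : Fin sO → ℝ) (k : ℕ) (hk : k < sO) :
    bTail sO bO k = bO ⟨k, hk⟩ + bTail sO bO (k + 1) := by
  unfold bTail
  have key : ∀ (i : Fin sO), i ∈ Finset.univ → (if k ≤ (i : ℕ) then bO i else 0)
      = (if i = ⟨k, hk⟩ then bO i else 0) + (if k + 1 ≤ (i : ℕ) then bO i else 0) := by
    intro i _
    by_cases h : i = ⟨k, hk⟩
    · subst h; simp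
    · have hne : (i : ℕ) ≠ k := fun hh => h (Fin.ext hh)
      rw [if_neg h]
      by_cases h2 : k ≤ (i : ℕ)
      · rw [if_pos h2, if_pos (by omega)]; ring
      · rw [if_neg h2, if_neg (by omega)]; ring
  rw [Finset.sum_congr rfl key, Finset.sum_add_distrib,
    Finset.sum_ite_eq' Finset.univ (⟨k, hk⟩ : Fin sO) bO]
  simp

end Helpers2

section Helpers3

/-- `bO` extended to `ℕ`. -/
noncomputable def bN (sO : ℕ) (bO : Fin sO → ℝ) (k : ℕ) : ℝ :=
  if h : k < sO then bO ⟨k, h⟩ else 0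

lemma phiN_zero (sO : ℕ) (hsO : 2 ≤ sO) (cO : Fin sO → ℝ)
    (hcO1 : cO ⟨0, Nat.zero_lt_of_lt hsO⟩ = 0) : phiN sO cO 0 = 0 := by
  rw [phiN, dif_pos (by omega : 0 < sO)]
  exact hcO1

lemma wN_val (sO : ℕ) (AO : Matrix (Fin sO) (Fin sO) ℝ) (cO : Fin sO → ℝ) (j : Fin sO) :
    wN sO AO cO (j : ℕ) = (AO *ᵥ cO) j := by
  simp [wN, j.isLt]

/-- `Asf *ᵥ Cf` evaluates to `cO i ^ 2 / 2`. -/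
lemma asf_cf (sI sO : ℕ) (hsO : 2 ≤ sO) (bI cI : Fin sI → ℝ) (cO : Fin sO → ℝ)
    (hbI1 : ∑ q, bI q = 1) (hbI2 : ∑ q, bI q * cI q = 1 / 2)
    (hcO1 : cO ⟨0, Nat.zero_lt_of_lt hsO⟩ = 0) (i : Fin sO) :
    (misAsf sI sO bI cO *ᵥ misCf sI sO cI cO) i = cO i ^ 2 / 2 := by
  rw [asf_apply]
  have h1 : ∀ (j : Fin sO), j ∈ Finset.univ →
      (if (j : ℕ) < (i : ℕ) then misD sO cO j * ∑ q, bI q * misCf sI sO cI cO (j, q) else 0)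
      = (if (j : ℕ) < (i : ℕ) then
          (fun k => phiN sO cO k ^ 2 / 2) ((j : ℕ) + 1) - (fun k => phiN sO cO k ^ 2 / 2) (j : ℕ)
         else 0) := by
    intro j _
    by_cases h : (j : ℕ) < (i : ℕ)
    · rw [if_pos h, if_pos h]
      simp only [misCf]
      rw [inner1 sI bI cI hbI1 hbI2 (cO j) (misD sO cO j), misD_eq_dN, ← phiN_val sO cO j]
      simp only [dN]
      ring
    · rw [if_neg h, if_neg h]
  rw [Finset.sum_congr rfl h1, tele_sum sO i (fun k => phiN sO cO k ^ 2 / 2), phiN_val,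
    phiN_zero sO hsO cO hcO1]
  ring

/-- `Asf *ᵥ (Cf ^ 2)` evaluates to `cO i ^ 3 / 3`. -/
lemma asf_cf_sq (sI sO : ℕ) (hsO : 2 ≤ sO) (bI cI : Fin sI → ℝ) (cO : Fin sO → ℝ)
    (hbI1 : ∑ q, bI q = 1) (hbI2 : ∑ q, bI q * cI q = 1 / 2)
    (hbI3 : ∑ q, bI q * (cI q * cI q) = 1 / 3)
    (hcO1 : cO ⟨0, Nat.zero_lt_of_lt hsO⟩ = 0) (i : Fin sO) :
    (misAsf sI sO bI cO *ᵥ fun jq => misCf sI sO cI cO jq ^ 2) i = cO i ^ 3 / 3 := by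
  rw [asf_apply]
  have h1 : ∀ (j : Fin sO), j ∈ Finset.univ →
      (if (j : ℕ) < (i : ℕ) then misD sO cO j * ∑ q, bI q * misCf sI sO cI cO (j, q) ^ 2 else 0)
      = (if (j : ℕ) < (i : ℕ) then
          (fun k => phiN sO cO k ^ 3 / 3) ((j : ℕ) + 1) - (fun k => phiN sO cO k ^ 3 / 3) (j : ℕ)
         else 0) := by
    intro j _
    by_cases h : (j : ℕ) < (i : ℕ)
    · rw [if_pos h, if_pos h]
      simp only [misCf]
      rw [inner2 sI bI cI hbI1 hbI2 hbI3 (cO j) (misD sO cO j), misD_eq_dN, ← phiN_val sO cO j]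
      simp only [dN]
      ring
    · rw [if_neg h, if_neg h]
  rw [Finset.sum_congr rfl h1, tele_sum sO i (fun k => phiN sO cO k ^ 3 / 3), phiN_val,
    phiN_zero sO hsO cO hcO1]
  ring

/-- The general entry of `Aff *ᵥ Cf`. -/
lemma aff_cf (sI sO : ℕ) (hsO : 2 ≤ sO) (AI : Matrix (Fin sI) (Fin sI) ℝ)
    (bI cI : Fin sI → ℝ) (cO : Fin sO → ℝ)
    (hbI1 : ∑ q, bI q = 1) (hbI2 : ∑ q, bI q * cI q = 1 / 2)
    (hAIrow : ∀ p, ∑ r, AI p r = cI p)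
    (hcO1 : cO ⟨0, Nat.zero_lt_of_lt hsO⟩ = 0) (j : Fin sO) (q : Fin sI) :
    (misAff sI sO AI bI cO *ᵥ misCf sI sO cI cO) (j, q)
      = cO j ^ 2 / 2 + misD sO cO j * (cO j * cI q + misD sO cO j * (AI *ᵥ cI) q) := by
  simp only [mulVec, dotProduct, Fintype.sum_prod_type, misAff]
  have h1 : ∀ (k : Fin sO), k ∈ Finset.univ →
      (∑ r, (if k < j then misD sO cO k * bI r
          else if k = j then misD sO cO j * AI q r else 0) * misCf sI sO cI cO (k, r))
      = (if (k : ℕ) < (j : ℕ) then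
          (fun l => phiN sO cO l ^ 2 / 2) ((k : ℕ) + 1) - (fun l => phiN sO cO l ^ 2 / 2) (k : ℕ)
         else 0)
        + (if k = j then misD sO cO j * (cO j * cI q + misD sO cO j * (AI *ᵥ cI) q) else 0) := by
    intro k _
    by_cases h : k < j
    · rw [if_pos (show (k : ℕ) < (j : ℕ) from h), if_neg (Fin.ne_of_lt h)]
      have e : ∀ r ∈ Finset.univ, (if k < j then misD sO cO k * bI r
          else if k = j then misD sO cO j * AI q r else 0) * misCf sI sO cI cO (k, r)
          = misD sO cO k * (bI r * (cO k + misD sO cO k * cI r)) := by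
        intro r _
        rw [if_pos h]
        simp only [misCf]
        ring
      rw [Finset.sum_congr rfl e, ← Finset.mul_sum,
        inner1 sI bI cI hbI1 hbI2 (cO k) (misD sO cO k), misD_eq_dN, ← phiN_val sO cO k]
      simp only [dN]
      ring
    · rw [if_neg (show ¬ (k : ℕ) < (j : ℕ) from h), zero_add]
      by_cases h2 : k = j
      · subst h2
        rw [if_pos rfl]
        have e : ∀ r ∈ Finset.univ, (if k < k then misD sO cO k * bI r
            else if k = k then misD sO cO k * AI q r else 0) * misCf sI sO cI cO (k, r)
            = misD sO cO k * cO k * AI q r + misD sO cO k * misD sO cO k * (AI q r * cI r) := by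
          intro r _
          rw [if_neg (lt_irrefl k), if_pos rfl]
          simp only [misCf]
          ring
        rw [Finset.sum_congr rfl e, Finset.sum_add_distrib, ← Finset.mul_sum, ← Finset.mul_sum,
          hAIrow q]
        simp only [mulVec, dotProduct]
        ring
      · rw [if_neg h2]
        refine Finset.sum_eq_zero fun r _ => ?_
        rw [if_neg h, if_neg h2, zero_mul]
  rw [Finset.sum_congr rfl h1, Finset.sum_add_distrib,
    tele_sum sO j (fun l => phiN sO cO l ^ 2 / 2), phiN_val,
    phiN_zero sO hsO cO hcO1, Finset.sum_ite_eq' Finset.univ j, if_pos (Finset.mem_univ j)]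
  simp only [Matrix.mulVec, dotProduct]
  ring

end Helpers3

section Helpers4

/-- `Asf *ᵥ (Aff *ᵥ Cf)` evaluates to `cO i ^ 3 / 6`. -/
lemma asf_aff_cf (sI sO : ℕ) (hsO : 2 ≤ sO) (AI : Matrix (Fin sI) (Fin sI) ℝ)
    (bI cI : Fin sI → ℝ) (cO : Fin sO → ℝ)
    (hbI1 : ∑ q, bI q = 1) (hbI2 : ∑ q, bI q * cI q = 1 / 2)
    (hbI4 : ∑ q, bI q * (AI *ᵥ cI) q = 1 / 6)
    (hAIrow : ∀ p, ∑ r, AI p r = cI p)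
    (hcO1 : cO ⟨0, Nat.zero_lt_of_lt hsO⟩ = 0) (i : Fin sO) :
    (misAsf sI sO bI cO *ᵥ (misAff sI sO AI bI cO *ᵥ misCf sI sO cI cO)) i
      = cO i ^ 3 / 6 := by
  rw [asf_apply]
  have h1 : ∀ (j : Fin sO), j ∈ Finset.univ →
      (if (j : ℕ) < (i : ℕ) then
          misD sO cO j * ∑ q, bI q * (misAff sI sO AI bI cO *ᵥ misCf sI sO cI cO) (j, q) else 0)
      = (if (j : ℕ) < (i : ℕ) then
          (fun k => phiN sO cO k ^ 3 / 6) ((j : ℕ) + 1) - (fun k => phiN sO cO k ^ 3 / 6) (j : ℕ)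
         else 0) := by
    intro j _
    by_cases h : (j : ℕ) < (i : ℕ)
    · rw [if_pos h, if_pos h]
      have e : ∀ q ∈ Finset.univ, bI q * (misAff sI sO AI bI cO *ᵥ misCf sI sO cI cO) (j, q)
          = bI q * (cO j ^ 2 / 2 + (misD sO cO j * cO j) * cI q
              + (misD sO cO j * misD sO cO j) * (AI *ᵥ cI) q) := by
        intro q _
        rw [aff_cf sI sO hsO AI bI cI cO hbI1 hbI2 hAIrow hcO1 j q]
        ring
      rw [Finset.sum_congr rfl e, inner3 sI AI bI cI hbI1 hbI2 hbI4, misD_eq_dN,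
        ← phiN_val sO cO j]
      simp only [dN]
      ring
    · rw [if_neg h, if_neg h]
  rw [Finset.sum_congr rfl h1, tele_sum sO i (fun k => phiN sO cO k ^ 3 / 6), phiN_val,
    phiN_zero sO hsO cO hcO1]
  ring

/-- The inner `bI`-average of `Afs *ᵥ cO` over block `j`. -/
lemma afs_inner (sI sO : ℕ) (hsO : 2 ≤ sO) (cI bI : Fin sI → ℝ)
    (AO : Matrix (Fin sO) (Fin sO) ℝ) (bO cO : Fin sO → ℝ)
    (hbI1 : ∑ q, bI q = 1) (hbI2 : ∑ q, bI q * cI q = 1 / 2)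
    (hbO2 : ∑ i, bO i * cO i = 1 / 2)
    (hAO0 : ∀ j, AO ⟨0, Nat.zero_lt_of_lt hsO⟩ j = 0) (j : Fin sO) :
    ∑ q, bI q * (misAfs sI sO cI AO bO *ᵥ cO) (j, q)
      = (wN sO AO cO (j : ℕ) + wN sO AO cO ((j : ℕ) + 1)) / 2 := by
  have hval : ∀ q, (misAfs sI sO cI AO bO *ᵥ cO) (j, q)
      = wN sO AO cO (j : ℕ) + (wN sO AO cO ((j : ℕ) + 1) - wN sO AO cO (j : ℕ)) * cI q := by
    intro q
    simp only [mulVec, dotProduct, misAfs]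
    by_cases h0 : (j : ℕ) = 0
    · have hw0 : wN sO AO cO (j : ℕ) = 0 := by
        rw [h0]; exact wN_zero sO hsO AO cO hAO0
      have h1 : (1 : ℕ) < sO := by omega
      have e : ∀ k ∈ Finset.univ,
          (if (j : ℕ) = 0 then (if h : 1 < sO then cI q * AO ⟨1, h⟩ k else 0)
            else if h : (j : ℕ) + 1 < sO then AO j k + cI q * (AO ⟨(j : ℕ) + 1, h⟩ k - AO j k)
            else AO j k + cI q * (bO k - AO j k)) * cO k
          = cI q * (AO ⟨1, h1⟩ k * cO k) := by
        intro k _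
        rw [if_pos h0, dif_pos h1]
        ring
      rw [Finset.sum_congr rfl e, ← Finset.mul_sum]
      have hw1 : wN sO AO cO ((j : ℕ) + 1) = ∑ k, AO ⟨1, h1⟩ k * cO k := by
        rw [h0, wN, dif_pos h1]
        rfl
      rw [hw1, hw0]
      ring
    · have hwj : wN sO AO cO (j : ℕ) = ∑ k, AO j k * cO k := by
        rw [wN, dif_pos j.isLt]
        simp [mulVec, dotProduct]
      by_cases h2 : (j : ℕ) + 1 < sO
      · have e : ∀ k ∈ Finset.univ,
            (if (j : ℕ) = 0 then (if h : 1 < sO then cI q * AO ⟨1, h⟩ k else 0)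
              else if h : (j : ℕ) + 1 < sO then AO j k + cI q * (AO ⟨(j : ℕ) + 1, h⟩ k - AO j k)
              else AO j k + cI q * (bO k - AO j k)) * cO k
            = AO j k * cO k + (cI q * (AO ⟨(j : ℕ) + 1, h2⟩ k * cO k)
                - cI q * (AO j k * cO k)) := by
          intro k _
          rw [if_neg h0, dif_pos h2]
          ring
        rw [Finset.sum_congr rfl e, Finset.sum_add_distrib, Finset.sum_sub_distrib,
          ← Finset.mul_sum, ← Finset.mul_sum]
        have hw1 : wN sO AO cO ((j : ℕ) + 1) = ∑ k, AO ⟨(j : ℕ) + 1, h2⟩ k * cO k := by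
          rw [wN, dif_pos h2]
          rfl
        rw [hw1, hwj]
        ring
      · have e : ∀ k ∈ Finset.univ,
            (if (j : ℕ) = 0 then (if h : 1 < sO then cI q * AO ⟨1, h⟩ k else 0)
              else if h : (j : ℕ) + 1 < sO then AO j k + cI q * (AO ⟨(j : ℕ) + 1, h⟩ k - AO j k)
              else AO j k + cI q * (bO k - AO j k)) * cO k
            = AO j k * cO k + (cI q * (bO k * cO k) - cI q * (AO j k * cO k)) := by
          intro k _
          rw [if_neg h0, dif_neg h2]
          ring
        rw [Finset.sum_congr rfl e, Finset.sum_add_distrib, Finset.sum_sub_distrib,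
          ← Finset.mul_sum, ← Finset.mul_sum]
        have hw1 : wN sO AO cO ((j : ℕ) + 1) = 1 / 2 := by
          rw [wN, dif_neg h2]
        rw [hw1, hwj, hbO2]
        ring
  have e2 : ∀ q ∈ Finset.univ, bI q * (misAfs sI sO cI AO bO *ᵥ cO) (j, q)
      = bI q * (wN sO AO cO (j : ℕ)
          + (wN sO AO cO ((j : ℕ) + 1) - wN sO AO cO (j : ℕ)) * cI q) := by
    intro q _
    rw [hval q]
  rw [Finset.sum_congr rfl e2, inner1 sI bI cI hbI1 hbI2]
  ring

end Helpers4

section Helpers5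

lemma misV_eq (sO : ℕ) (bO cO : Fin sO → ℝ) (i : Fin sO) (hk : 1 ≤ (i : ℕ)) :
    misV sO bO cO i = bO i * dN sO cO ((i : ℕ) - 1)
      + (dN sO cO ((i : ℕ) - 1) + dN sO cO (i : ℕ)) * bTail sO bO ((i : ℕ) + 1) := by
  have hlt := i.isLt
  have hidx : (i : ℕ) - 1 + 1 = (i : ℕ) := by omega
  have h1 : phiN sO cO ((i : ℕ) - 1 + 1) = cO i := by rw [hidx]; exact phiN_val sO cO i
  have h2 : phiN sO cO ((i : ℕ) - 1) = cO ⟨(i : ℕ) - 1, by omega⟩ := by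
    rw [phiN, dif_pos (by omega : (i : ℕ) - 1 < sO)]
  have h4 : phiN sO cO (i : ℕ) = cO i := phiN_val sO cO i
  have e1 : cO i - cO ⟨(i : ℕ) - 1, by omega⟩ = dN sO cO ((i : ℕ) - 1) := by
    rw [dN, h1, h2]
  unfold misV
  rw [if_neg (by omega)]
  by_cases h : (i : ℕ) + 1 < sO
  · rw [dif_pos h]
    have e2 : cO ⟨(i : ℕ) + 1, h⟩ - cO ⟨(i : ℕ) - 1, by omega⟩
        = dN sO cO ((i : ℕ) - 1) + dN sO cO (i : ℕ) := by
      have h3 : phiN sO cO ((i : ℕ) + 1) = cO ⟨(i : ℕ) + 1, h⟩ := by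
        rw [phiN, dif_pos h]
      rw [dN, dN, h1, h2, h3, h4]
      ring
    have e3 : ∑ j ∈ Finset.univ.filter (fun j => i < j), bO j
        = bTail sO bO ((i : ℕ) + 1) := by
      rw [Finset.sum_filter, bTail]
      refine Finset.sum_congr rfl fun x _ => ?_
      by_cases hx : i < x
      · rw [if_pos hx, if_pos (by omega : (i : ℕ) + 1 ≤ (x : ℕ))]
      · rw [if_neg hx, if_neg (by rw [Fin.lt_def] at hx; omega)]
    rw [e1, e2, e3]
  · rw [dif_neg h]
    rw [bTail_top sO bO ((i : ℕ) + 1) (by omega), mul_zero, add_zero, e1]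

lemma swap_sum (sO : ℕ) (bO : Fin sO → ℝ) (X : ℕ → ℝ) :
    ∑ i : Fin sO, bO i * ∑ j : Fin sO, (if (j : ℕ) < (i : ℕ) then X (j : ℕ) else 0)
      = ∑ k ∈ Finset.range sO, X k * bTail sO bO (k + 1) := by
  have step : ∑ i : Fin sO, bO i * ∑ j : Fin sO, (if (j : ℕ) < (i : ℕ) then X (j : ℕ) else 0)
      = ∑ j : Fin sO, X (j : ℕ) * bTail sO bO ((j : ℕ) + 1) := by
    simp only [Finset.mul_sum, mul_ite, mul_zero]
    rw [Finset.sum_comm]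
    refine Finset.sum_congr rfl fun j _ => ?_
    rw [bTail, Finset.mul_sum]
    refine Finset.sum_congr rfl fun i _ => ?_
    by_cases h : (j : ℕ) < (i : ℕ)
    · rw [if_pos h, if_pos (by omega : (j : ℕ) + 1 ≤ (i : ℕ))]
      ring
    · rw [if_neg h, if_neg (by omega), mul_zero]
  rw [step]
  exact Fin.sum_univ_eq_sum_range (fun k => X k * bTail sO bO (k + 1)) sO

/-- The key combinatorial identity behind the fourth-order coupling condition. -/
lemma key_identity (sO : ℕ) (hsO : 2 ≤ sO) (dd ww bb bt : ℕ → ℝ)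
    (hw0 : ww 0 = 0) (hbt_top : bt sO = 0)
    (hbt : ∀ k, k < sO → bt k = bb k + bt (k + 1)) :
    ∑ k ∈ Finset.range sO, (dd k * ((ww k + ww (k + 1)) / 2)) * bt (k + 1)
      = (1 / 2) * ∑ k ∈ Finset.range sO,
          (if k = 0 then 0 else bb k * dd (k - 1) + (dd (k - 1) + dd k) * bt (k + 1)) * ww k := by
  obtain ⟨m, rfl⟩ : ∃ m, sO = m + 1 := ⟨sO - 1, by omega⟩
  have hA : ∑ k ∈ Finset.range (m + 1), dd k * ww k * bt (k + 1)
      = ∑ k ∈ Finset.range m, dd (k + 1) * ww (k + 1) * bt (k + 2) := by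
    rw [Finset.sum_range_succ' (fun k => dd k * ww k * bt (k + 1)) m, hw0]
    simp
  have hB : ∑ k ∈ Finset.range (m + 1), dd k * ww (k + 1) * bt (k + 1)
      = ∑ k ∈ Finset.range m, dd k * ww (k + 1) * bt (k + 1) := by
    rw [Finset.sum_range_succ, hbt_top]
    simp
  have hG : ∑ k ∈ Finset.range (m + 1),
        (if k = 0 then 0 else bb k * dd (k - 1) + (dd (k - 1) + dd k) * bt (k + 1)) * ww k
      = ∑ k ∈ Finset.range m,
          (dd k * ww (k + 1) * bt (k + 1) + dd (k + 1) * ww (k + 1) * bt (k + 2)) := by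
    rw [Finset.sum_range_succ' (fun k =>
      (if k = 0 then 0 else bb k * dd (k - 1) + (dd (k - 1) + dd k) * bt (k + 1)) * ww k) m]
    rw [if_pos rfl, zero_mul, add_zero]
    refine Finset.sum_congr rfl fun k hk => ?_
    rw [Finset.mem_range] at hk
    rw [if_neg (by omega), Nat.add_sub_cancel]
    have := hbt (k + 1) (by omega)
    rw [this]
    ring
  have expand : ∀ k, (dd k * ((ww k + ww (k + 1)) / 2)) * bt (k + 1)
      = (1 / 2) * (dd k * ww k * bt (k + 1)) + (1 / 2) * (dd k * ww (k + 1) * bt (k + 1)) := by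
    intro k; ring
  rw [Finset.sum_congr rfl (fun k _ => expand k), Finset.sum_add_distrib,
    ← Finset.mul_sum, ← Finset.mul_sum, hA, hB, hG, Finset.mul_sum, Finset.mul_sum,
    Finset.mul_sum, ← Finset.sum_add_distrib]
  refine Finset.sum_congr rfl fun k _ => ?_
  ring

end Helpers5


/-- Theorem 2: Under the stated assumptions on `T_I` and `T_O`, all 28
GARK order conditions through order four hold for the RMIS tableau. -/
theorem rmis_fourth_order (sI sO : ℕ) (hsI : 1 ≤ sI) (hsO : 2 ≤ sO)
    (AI : Matrix (Fin sI) (Fin sI) ℝ) (bI cI : Fin sI → ℝ)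
    (AO : Matrix (Fin sO) (Fin sO) ℝ) (bO cO : Fin sO → ℝ)
    (hcO1 : cO ⟨0, by omega⟩ = 0)
    -- (i) inner table: third order, row-sum consistent, explicit first stage
    (hbI1 : ∑ q, bI q = 1)
    (hbI2 : ∑ q, bI q * cI q = 1 / 2)
    (hbI3 : ∑ q, bI q * (cI q * cI q) = 1 / 3)
    (hbI4 : ∑ q, bI q * (AI *ᵥ cI) q = 1 / 6)
    (hAIrow : ∀ p, ∑ q, AI p q = cI p)
    (hcI1 : cI ⟨0, by omega⟩ = 0)
    (hAI1 : ∀ q, AI ⟨0, by omega⟩ q = 0)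
    -- (ii) outer table: explicit, row-sum consistent, fourth order
    (hAOexp : ∀ i j : Fin sO, i ≤ j → AO i j = 0)
    (hAOrow : ∀ i, ∑ j, AO i j = cO i)
    (hbO1 : ∑ i, bO i = 1)
    (hbO2 : ∑ i, bO i * cO i = 1 / 2)
    (hbO3 : ∑ i, bO i * (cO i) ^ 2 = 1 / 3)
    (hbO4 : bO ⬝ᵥ (AO *ᵥ cO) = 1 / 6)
    (hbO5 : ∑ i, bO i * (cO i) ^ 3 = 1 / 4)
    (hbO6 : (fun i => bO i * cO i) ⬝ᵥ (AO *ᵥ cO) = 1 / 8)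
    (hbO7 : bO ⬝ᵥ (AO *ᵥ fun i => (cO i) ^ 2) = 1 / 12)
    (hbO8 : bO ⬝ᵥ (AO *ᵥ (AO *ᵥ cO)) = 1 / 24)
    -- (iii) the fourth-order RMIS condition
    (hv : misV sO bO cO ⬝ᵥ (AO *ᵥ cO) = 1 / 12) :
    let Bf := misBf sI sO bO
    let Cf := misCf sI sO cI cO
    let Aff := misAff sI sO AI bI cO
    let Afs := misAfs sI sO cI AO bO
    let Asf := misAsf sI sO bI cO
    -- order 1
    ((∑ ip, Bf ip = 1) ∧ (∑ i, bO i = 1) ∧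
    -- order 2
    (∑ ip, Bf ip * Cf ip = 1 / 2) ∧ (∑ i, bO i * cO i = 1 / 2) ∧
    -- order 3
    (∑ ip, Bf ip * (Cf ip) ^ 2 = 1 / 3) ∧ (∑ i, bO i * (cO i) ^ 2 = 1 / 3) ∧
    (Bf ⬝ᵥ (Aff *ᵥ Cf) = 1 / 6) ∧ (Bf ⬝ᵥ (Afs *ᵥ cO) = 1 / 6) ∧
    (bO ⬝ᵥ (Asf *ᵥ Cf) = 1 / 6) ∧ (bO ⬝ᵥ (AO *ᵥ cO) = 1 / 6) ∧
    -- order 4, condition (4a)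
    (∑ ip, Bf ip * (Cf ip) ^ 3 = 1 / 4) ∧ (∑ i, bO i * (cO i) ^ 3 = 1 / 4) ∧
    -- order 4, condition (4b)
    ((fun ip => Bf ip * Cf ip) ⬝ᵥ (Aff *ᵥ Cf) = 1 / 8) ∧
    ((fun ip => Bf ip * Cf ip) ⬝ᵥ (Afs *ᵥ cO) = 1 / 8) ∧
    ((fun i => bO i * cO i) ⬝ᵥ (Asf *ᵥ Cf) = 1 / 8) ∧
    ((fun i => bO i * cO i) ⬝ᵥ (AO *ᵥ cO) = 1 / 8) ∧
    -- order 4, condition (4c)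
    (Bf ⬝ᵥ (Aff *ᵥ fun jq => (Cf jq) ^ 2) = 1 / 12) ∧
    (Bf ⬝ᵥ (Afs *ᵥ fun j => (cO j) ^ 2) = 1 / 12) ∧
    (bO ⬝ᵥ (Asf *ᵥ fun jq => (Cf jq) ^ 2) = 1 / 12) ∧
    (bO ⬝ᵥ (AO *ᵥ fun j => (cO j) ^ 2) = 1 / 12) ∧
    -- order 4, condition (4d)
    (Bf ⬝ᵥ (Aff *ᵥ (Aff *ᵥ Cf)) = 1 / 24) ∧
    (Bf ⬝ᵥ (Aff *ᵥ (Afs *ᵥ cO)) = 1 / 24) ∧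
    (Bf ⬝ᵥ (Afs *ᵥ (Asf *ᵥ Cf)) = 1 / 24) ∧
    (Bf ⬝ᵥ (Afs *ᵥ (AO *ᵥ cO)) = 1 / 24) ∧
    (bO ⬝ᵥ (Asf *ᵥ (Aff *ᵥ Cf)) = 1 / 24) ∧
    (bO ⬝ᵥ (Asf *ᵥ (Afs *ᵥ cO)) = 1 / 24) ∧
    (bO ⬝ᵥ (AO *ᵥ (Asf *ᵥ Cf)) = 1 / 24) ∧
    (bO ⬝ᵥ (AO *ᵥ (AO *ᵥ cO)) = 1 / 24)) := by
  intro Bf Cf Aff Afs Asf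
  have hAO0 : ∀ j, AO ⟨0, by omega⟩ j = 0 := fun j =>
    hAOexp ⟨0, by omega⟩ j (by simp [Fin.le_def])
  have hcI1' : cI ⟨0, hsI⟩ = 0 := hcI1
  have hAI1' : ∀ q, AI ⟨0, hsI⟩ q = 0 := hAI1
  have hCfz : ∀ i, misCf sI sO cI cO (i, ⟨0, hsI⟩) = cO i := fun i => by
    simp [misCf, hcI1']
  have hasfCf : ∀ i, (misAsf sI sO bI cO *ᵥ misCf sI sO cI cO) i = cO i ^ 2 / 2 :=
    asf_cf sI sO hsO bI cI cO hbI1 hbI2 hcO1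
  have hasfCf2 : ∀ i, (misAsf sI sO bI cO *ᵥ fun jq => misCf sI sO cI cO jq ^ 2) i
      = cO i ^ 3 / 3 := asf_cf_sq sI sO hsO bI cI cO hbI1 hbI2 hbI3 hcO1
  have hasfAffCf : ∀ i,
      (misAsf sI sO bI cO *ᵥ (misAff sI sO AI bI cO *ᵥ misCf sI sO cI cO)) i
      = cO i ^ 3 / 6 :=
    asf_aff_cf sI sO hsO AI bI cI cO hbI1 hbI2 hbI4 hAIrow hcO1
  -- scalar consequences of the outer order conditions
  have s2 : ∑ i, bO i * (cO i ^ 2 / 2) = 1 / 6 := by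
    have e : ∑ i, bO i * (cO i ^ 2 / 2) = (∑ i, bO i * cO i ^ 2) / 2 := by
      rw [Finset.sum_div]; exact Finset.sum_congr rfl fun i _ => by ring
    rw [e, hbO3]; norm_num
  have s3a : ∑ i, bO i * (cO i ^ 3 / 3) = 1 / 12 := by
    have e : ∑ i, bO i * (cO i ^ 3 / 3) = (∑ i, bO i * cO i ^ 3) / 3 := by
      rw [Finset.sum_div]; exact Finset.sum_congr rfl fun i _ => by ring
    rw [e, hbO5]; norm_num
  have s3b : ∑ i, bO i * (cO i ^ 3 / 6) = 1 / 24 := by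
    have e : ∑ i, bO i * (cO i ^ 3 / 6) = (∑ i, bO i * cO i ^ 3) / 6 := by
      rw [Finset.sum_div]; exact Finset.sum_congr rfl fun i _ => by ring
    rw [e, hbO5]; norm_num
  have s4 : ∑ i, bO i * (cO i * (cO i ^ 2 / 2)) = 1 / 8 := by
    have e : ∑ i, bO i * (cO i * (cO i ^ 2 / 2)) = (∑ i, bO i * cO i ^ 3) / 2 := by
      rw [Finset.sum_div]; exact Finset.sum_congr rfl fun i _ => by ring
    rw [e, hbO5]; norm_num
  -- the 28 conditions
  have c1 : ∑ ip : Fin sO × Fin sI, misBf sI sO bO ip = 1 := by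
    have e : ∑ ip : Fin sO × Fin sI, misBf sI sO bO ip
        = ∑ ip : Fin sO × Fin sI, misBf sI sO bO ip * (fun _ => (1 : ℝ)) ip := by
      simp
    rw [e, sum_bf sI sO hsI bO (fun _ => (1 : ℝ))]
    simpa using hbO1
  have c3 : ∑ ip : Fin sO × Fin sI, misBf sI sO bO ip * misCf sI sO cI cO ip = 1 / 2 := by
    rw [sum_bf sI sO hsI bO (misCf sI sO cI cO)]
    have e : ∀ (i : Fin sO), i ∈ Finset.univ →
        bO i * misCf sI sO cI cO (i, ⟨0, hsI⟩) = bO i * cO i := fun i _ => by rw [hCfz]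
    rw [Finset.sum_congr rfl e, hbO2]
  have c5 : ∑ ip : Fin sO × Fin sI, misBf sI sO bO ip * misCf sI sO cI cO ip ^ 2 = 1 / 3 := by
    rw [sum_bf sI sO hsI bO (fun ip => misCf sI sO cI cO ip ^ 2)]
    have e : ∀ (i : Fin sO), i ∈ Finset.univ →
        bO i * misCf sI sO cI cO (i, ⟨0, hsI⟩) ^ 2 = bO i * cO i ^ 2 := fun i _ => by rw [hCfz]
    rw [Finset.sum_congr rfl e, hbO3]
  have c11 : ∑ ip : Fin sO × Fin sI, misBf sI sO bO ip * misCf sI sO cI cO ip ^ 3 = 1 / 4 := by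
    rw [sum_bf sI sO hsI bO (fun ip => misCf sI sO cI cO ip ^ 3)]
    have e : ∀ (i : Fin sO), i ∈ Finset.univ →
        bO i * misCf sI sO cI cO (i, ⟨0, hsI⟩) ^ 3 = bO i * cO i ^ 3 := fun i _ => by rw [hCfz]
    rw [Finset.sum_congr rfl e, hbO5]
  have c7 : misBf sI sO bO ⬝ᵥ (misAff sI sO AI bI cO *ᵥ misCf sI sO cI cO) = 1 / 6 := by
    simp only [dotProduct]
    rw [sum_bf sI sO hsI bO (misAff sI sO AI bI cO *ᵥ misCf sI sO cI cO)]
    have e : ∀ (i : Fin sO), i ∈ Finset.univ →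
        bO i * (misAff sI sO AI bI cO *ᵥ misCf sI sO cI cO) (i, ⟨0, hsI⟩)
        = bO i * (cO i ^ 2 / 2) := fun i _ => by
      rw [aff_z sI sO hsI AI bI cO hAI1' _ i, hasfCf]
    rw [Finset.sum_congr rfl e, s2]
  have c9 : bO ⬝ᵥ (misAsf sI sO bI cO *ᵥ misCf sI sO cI cO) = 1 / 6 := by
    simp only [dotProduct]
    have e : ∀ (i : Fin sO), i ∈ Finset.univ →
        bO i * (misAsf sI sO bI cO *ᵥ misCf sI sO cI cO) i = bO i * (cO i ^ 2 / 2) :=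
      fun i _ => by rw [hasfCf]
    rw [Finset.sum_congr rfl e, s2]
  have c8 : misBf sI sO bO ⬝ᵥ (misAfs sI sO cI AO bO *ᵥ cO) = 1 / 6 := by
    simp only [dotProduct]
    rw [sum_bf sI sO hsI bO (misAfs sI sO cI AO bO *ᵥ cO)]
    have e : ∀ (i : Fin sO), i ∈ Finset.univ →
        bO i * (misAfs sI sO cI AO bO *ᵥ cO) (i, ⟨0, hsI⟩)
        = bO i * (AO *ᵥ cO) i := fun i _ => by
      rw [afs_z sI sO hsI hsO cI AO bO hcI1' hAO0 cO i]
    rw [Finset.sum_congr rfl e]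
    exact hbO4
  have c13 : (fun ip => misBf sI sO bO ip * misCf sI sO cI cO ip)
      ⬝ᵥ (misAff sI sO AI bI cO *ᵥ misCf sI sO cI cO) = 1 / 8 := by
    simp only [dotProduct]
    have e0 : ∀ (ip : Fin sO × Fin sI), ip ∈ Finset.univ →
        (misBf sI sO bO ip * misCf sI sO cI cO ip)
          * (misAff sI sO AI bI cO *ᵥ misCf sI sO cI cO) ip
        = misBf sI sO bO ip * (misCf sI sO cI cO ip
            * (misAff sI sO AI bI cO *ᵥ misCf sI sO cI cO) ip) := fun _ _ => by ring
    rw [Finset.sum_congr rfl e0, sum_bf sI sO hsI bO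
      (fun ip => misCf sI sO cI cO ip * (misAff sI sO AI bI cO *ᵥ misCf sI sO cI cO) ip)]
    have e : ∀ (i : Fin sO), i ∈ Finset.univ →
        bO i * (misCf sI sO cI cO (i, ⟨0, hsI⟩)
          * (misAff sI sO AI bI cO *ᵥ misCf sI sO cI cO) (i, ⟨0, hsI⟩))
        = bO i * (cO i * (cO i ^ 2 / 2)) := fun i _ => by
      rw [hCfz, aff_z sI sO hsI AI bI cO hAI1' _ i, hasfCf]
    rw [Finset.sum_congr rfl e, s4]
  have c14 : (fun ip => misBf sI sO bO ip * misCf sI sO cI cO ip)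
      ⬝ᵥ (misAfs sI sO cI AO bO *ᵥ cO) = 1 / 8 := by
    simp only [dotProduct]
    have e0 : ∀ (ip : Fin sO × Fin sI), ip ∈ Finset.univ →
        (misBf sI sO bO ip * misCf sI sO cI cO ip) * (misAfs sI sO cI AO bO *ᵥ cO) ip
        = misBf sI sO bO ip
            * (misCf sI sO cI cO ip * (misAfs sI sO cI AO bO *ᵥ cO) ip) := fun _ _ => by ring
    rw [Finset.sum_congr rfl e0, sum_bf sI sO hsI bO
      (fun ip => misCf sI sO cI cO ip * (misAfs sI sO cI AO bO *ᵥ cO) ip)]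
    have e : ∀ (i : Fin sO), i ∈ Finset.univ →
        bO i * (misCf sI sO cI cO (i, ⟨0, hsI⟩) * (misAfs sI sO cI AO bO *ᵥ cO) (i, ⟨0, hsI⟩))
        = (bO i * cO i) * (AO *ᵥ cO) i := fun i _ => by
      rw [hCfz, afs_z sI sO hsI hsO cI AO bO hcI1' hAO0 cO i]
      ring
    rw [Finset.sum_congr rfl e]
    exact hbO6
  have c15 : (fun i => bO i * cO i) ⬝ᵥ (misAsf sI sO bI cO *ᵥ misCf sI sO cI cO) = 1 / 8 := by
    simp only [dotProduct]
    have e : ∀ (i : Fin sO), i ∈ Finset.univ →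
        (bO i * cO i) * (misAsf sI sO bI cO *ᵥ misCf sI sO cI cO) i
        = bO i * (cO i * (cO i ^ 2 / 2)) := fun i _ => by rw [hasfCf]; ring
    rw [Finset.sum_congr rfl e, s4]
  have c17 : misBf sI sO bO ⬝ᵥ (misAff sI sO AI bI cO *ᵥ fun jq => misCf sI sO cI cO jq ^ 2)
      = 1 / 12 := by
    simp only [dotProduct]
    rw [sum_bf sI sO hsI bO (misAff sI sO AI bI cO *ᵥ fun jq => misCf sI sO cI cO jq ^ 2)]
    have e : ∀ (i : Fin sO), i ∈ Finset.univ →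
        bO i * (misAff sI sO AI bI cO *ᵥ fun jq => misCf sI sO cI cO jq ^ 2) (i, ⟨0, hsI⟩)
        = bO i * (cO i ^ 3 / 3) := fun i _ => by
      rw [aff_z sI sO hsI AI bI cO hAI1' _ i, hasfCf2]
    rw [Finset.sum_congr rfl e, s3a]
  have c19 : bO ⬝ᵥ (misAsf sI sO bI cO *ᵥ fun jq => misCf sI sO cI cO jq ^ 2) = 1 / 12 := by
    simp only [dotProduct]
    have e : ∀ (i : Fin sO), i ∈ Finset.univ →
        bO i * (misAsf sI sO bI cO *ᵥ fun jq => misCf sI sO cI cO jq ^ 2) i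
        = bO i * (cO i ^ 3 / 3) := fun i _ => by rw [hasfCf2]
    rw [Finset.sum_congr rfl e, s3a]
  have c18 : misBf sI sO bO ⬝ᵥ (misAfs sI sO cI AO bO *ᵥ fun j => cO j ^ 2) = 1 / 12 := by
    simp only [dotProduct]
    rw [sum_bf sI sO hsI bO (misAfs sI sO cI AO bO *ᵥ fun j => cO j ^ 2)]
    have e : ∀ (i : Fin sO), i ∈ Finset.univ →
        bO i * (misAfs sI sO cI AO bO *ᵥ fun j => cO j ^ 2) (i, ⟨0, hsI⟩)
        = bO i * (AO *ᵥ fun j => cO j ^ 2) i := fun i _ => by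
      rw [afs_z sI sO hsI hsO cI AO bO hcI1' hAO0 _ i]
    rw [Finset.sum_congr rfl e]
    exact hbO7
  have c21 : misBf sI sO bO
      ⬝ᵥ (misAff sI sO AI bI cO *ᵥ (misAff sI sO AI bI cO *ᵥ misCf sI sO cI cO)) = 1 / 24 := by
    simp only [dotProduct]
    rw [sum_bf sI sO hsI bO
      (misAff sI sO AI bI cO *ᵥ (misAff sI sO AI bI cO *ᵥ misCf sI sO cI cO))]
    have e : ∀ (i : Fin sO), i ∈ Finset.univ →
        bO i * (misAff sI sO AI bI cO *ᵥ (misAff sI sO AI bI cO *ᵥ misCf sI sO cI cO))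
            (i, ⟨0, hsI⟩)
        = bO i * (cO i ^ 3 / 6) := fun i _ => by
      rw [aff_z sI sO hsI AI bI cO hAI1' _ i, hasfAffCf]
    rw [Finset.sum_congr rfl e, s3b]
  have c25 : bO ⬝ᵥ (misAsf sI sO bI cO
      *ᵥ (misAff sI sO AI bI cO *ᵥ misCf sI sO cI cO)) = 1 / 24 := by
    simp only [dotProduct]
    have e : ∀ (i : Fin sO), i ∈ Finset.univ →
        bO i * (misAsf sI sO bI cO *ᵥ (misAff sI sO AI bI cO *ᵥ misCf sI sO cI cO)) i
        = bO i * (cO i ^ 3 / 6) := fun i _ => by rw [hasfAffCf]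
    rw [Finset.sum_congr rfl e, s3b]
  have hvec : (misAsf sI sO bI cO *ᵥ misCf sI sO cI cO) = fun i => cO i ^ 2 / 2 :=
    funext hasfCf
  have hAOhalf : bO ⬝ᵥ (AO *ᵥ fun j => cO j ^ 2 / 2) = 1 / 24 := by
    have e : (fun j => cO j ^ 2 / 2) = (2⁻¹ : ℝ) • (fun j => cO j ^ 2) := by
      funext j; simp [smul_eq_mul]; ring
    rw [e, Matrix.mulVec_smul, dotProduct_smul, smul_eq_mul, hbO7]
    norm_num
  have c23 : misBf sI sO bO
      ⬝ᵥ (misAfs sI sO cI AO bO *ᵥ (misAsf sI sO bI cO *ᵥ misCf sI sO cI cO)) = 1 / 24 := by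
    simp only [dotProduct]
    rw [sum_bf sI sO hsI bO
      (misAfs sI sO cI AO bO *ᵥ (misAsf sI sO bI cO *ᵥ misCf sI sO cI cO))]
    have e : ∀ (i : Fin sO), i ∈ Finset.univ →
        bO i * (misAfs sI sO cI AO bO *ᵥ (misAsf sI sO bI cO *ᵥ misCf sI sO cI cO))
            (i, ⟨0, hsI⟩)
        = bO i * (AO *ᵥ fun j => cO j ^ 2 / 2) i := fun i _ => by
      rw [afs_z sI sO hsI hsO cI AO bO hcI1' hAO0 _ i, hvec]
    rw [Finset.sum_congr rfl e]
    exact hAOhalf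
  have c27 : bO ⬝ᵥ (AO *ᵥ (misAsf sI sO bI cO *ᵥ misCf sI sO cI cO)) = 1 / 24 := by
    rw [hvec]
    exact hAOhalf
  have c24 : misBf sI sO bO ⬝ᵥ (misAfs sI sO cI AO bO *ᵥ (AO *ᵥ cO)) = 1 / 24 := by
    simp only [dotProduct]
    rw [sum_bf sI sO hsI bO (misAfs sI sO cI AO bO *ᵥ (AO *ᵥ cO))]
    have e : ∀ (i : Fin sO), i ∈ Finset.univ →
        bO i * (misAfs sI sO cI AO bO *ᵥ (AO *ᵥ cO)) (i, ⟨0, hsI⟩)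
        = bO i * (AO *ᵥ (AO *ᵥ cO)) i := fun i _ => by
      rw [afs_z sI sO hsI hsO cI AO bO hcI1' hAO0 _ i]
    rw [Finset.sum_congr rfl e]
    exact hbO8
  -- the coupling condition using `hv`
  have hw0 : wN sO AO cO 0 = 0 := wN_zero sO hsO AO cO hAO0
  have htop : bTail sO bO sO = 0 := bTail_top sO bO sO le_rfl
  have hbt : ∀ k, k < sO → bTail sO bO k = bN sO bO k + bTail sO bO (k + 1) := by
    intro k hk
    rw [bTail_succ sO bO k hk, bN, dif_pos hk]
  have hvrange : ∑ k ∈ Finset.range sO,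
      (if k = 0 then 0 else bN sO bO k * dN sO cO (k - 1)
        + (dN sO cO (k - 1) + dN sO cO k) * bTail sO bO (k + 1)) * wN sO AO cO k
      = 1 / 12 := by
    have e2 : ∀ (i : Fin sO), i ∈ Finset.univ →
        misV sO bO cO i * (AO *ᵥ cO) i
        = (if (i : ℕ) = 0 then 0 else bN sO bO (i : ℕ) * dN sO cO ((i : ℕ) - 1)
            + (dN sO cO ((i : ℕ) - 1) + dN sO cO (i : ℕ)) * bTail sO bO ((i : ℕ) + 1))
          * wN sO AO cO (i : ℕ) := by
      intro i _
      by_cases h0 : (i : ℕ) = 0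
      · rw [if_pos h0]
        have : misV sO bO cO i = 0 := by rw [misV, if_pos h0]
        rw [this, zero_mul, zero_mul]
      · rw [if_neg h0, misV_eq sO bO cO i (by omega), wN_val,
          show bN sO bO (i : ℕ) = bO i by rw [bN, dif_pos i.isLt]]
    calc ∑ k ∈ Finset.range sO,
          (if k = 0 then 0 else bN sO bO k * dN sO cO (k - 1)
            + (dN sO cO (k - 1) + dN sO cO k) * bTail sO bO (k + 1)) * wN sO AO cO k
        = ∑ i : Fin sO,
            (if (i : ℕ) = 0 then 0 else bN sO bO (i : ℕ) * dN sO cO ((i : ℕ) - 1)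
              + (dN sO cO ((i : ℕ) - 1) + dN sO cO (i : ℕ)) * bTail sO bO ((i : ℕ) + 1))
            * wN sO AO cO (i : ℕ) :=
          (Fin.sum_univ_eq_sum_range (fun k =>
            (if k = 0 then 0 else bN sO bO k * dN sO cO (k - 1)
              + (dN sO cO (k - 1) + dN sO cO k) * bTail sO bO (k + 1)) * wN sO AO cO k) sO).symm
      _ = ∑ i : Fin sO, misV sO bO cO i * (AO *ᵥ cO) i := (Finset.sum_congr rfl e2).symm
      _ = 1 / 12 := hv
  have c26 : bO ⬝ᵥ (misAsf sI sO bI cO *ᵥ (misAfs sI sO cI AO bO *ᵥ cO)) = 1 / 24 := by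
    simp only [dotProduct]
    have e : ∀ (i : Fin sO), i ∈ Finset.univ →
        bO i * (misAsf sI sO bI cO *ᵥ (misAfs sI sO cI AO bO *ᵥ cO)) i
        = bO i * ∑ j : Fin sO, (if (j : ℕ) < (i : ℕ) then
            dN sO cO (j : ℕ) * ((wN sO AO cO (j : ℕ) + wN sO AO cO ((j : ℕ) + 1)) / 2)
          else 0) := by
      intro i _
      rw [asf_apply]
      congr 1
      refine Finset.sum_congr rfl fun j _ => ?_
      by_cases h : (j : ℕ) < (i : ℕ)
      · rw [if_pos h, if_pos h,
          afs_inner sI sO hsO cI bI AO bO cO hbI1 hbI2 hbO2 hAO0 j, misD_eq_dN]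
      · rw [if_neg h, if_neg h]
    calc ∑ i, bO i * (misAsf sI sO bI cO *ᵥ (misAfs sI sO cI AO bO *ᵥ cO)) i
        = ∑ k ∈ Finset.range sO,
            (dN sO cO k * ((wN sO AO cO k + wN sO AO cO (k + 1)) / 2)) * bTail sO bO (k + 1) := by
          rw [Finset.sum_congr rfl e]
          exact swap_sum sO bO
            (fun k => dN sO cO k * ((wN sO AO cO k + wN sO AO cO (k + 1)) / 2))
      _ = (1 / 2) * ∑ k ∈ Finset.range sO,
            (if k = 0 then 0 else bN sO bO k * dN sO cO (k - 1)
              + (dN sO cO (k - 1) + dN sO cO k) * bTail sO bO (k + 1)) * wN sO AO cO k :=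
          key_identity sO hsO (dN sO cO) (wN sO AO cO) (bN sO bO) (bTail sO bO) hw0 htop hbt
      _ = 1 / 24 := by rw [hvrange]; norm_num
  have c22 : misBf sI sO bO
      ⬝ᵥ (misAff sI sO AI bI cO *ᵥ (misAfs sI sO cI AO bO *ᵥ cO)) = 1 / 24 := by
    simp only [dotProduct]
    rw [sum_bf sI sO hsI bO (misAff sI sO AI bI cO *ᵥ (misAfs sI sO cI AO bO *ᵥ cO))]
    have e : ∀ (i : Fin sO), i ∈ Finset.univ →
        bO i * (misAff sI sO AI bI cO *ᵥ (misAfs sI sO cI AO bO *ᵥ cO)) (i, ⟨0, hsI⟩)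
        = bO i * (misAsf sI sO bI cO *ᵥ (misAfs sI sO cI AO bO *ᵥ cO)) i := fun i _ => by
      rw [aff_z sI sO hsI AI bI cO hAI1' _ i]
    rw [Finset.sum_congr rfl e]
    exact c26
  have hbO4' : bO ⬝ᵥ (AO *ᵥ cO) = 1 / 6 := hbO4
  exact ⟨c1, hbO1, c3, hbO2, c5, hbO3, c7, c8, c9, hbO4', c11, hbO5, c13, c14, c15, hbO6,
    c17, c18, c19, hbO7, c21, c22, c23, c24, c25, c26, c27, hbO8⟩
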